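/- arXiv:1802.02384 — 4 statements merged into one kernel-verified Lean document; each statement's English description precedes it below -/
import Mathlib

section
/- For real matrices A and B, the Moore–Penrose pseudo-inverse of their Kronecker product equals the Kronecker product of their pseudo-inverses: (A ⊗ B)† = A† ⊗ B†. -/
/-
The four Moore–Penrose equations determine the pseudo-inverse uniquely, and each of them is
preserved by the Kronecker product, since `(A ⊗ B)(C ⊗ D) = AC ⊗ BD` and
`(A ⊗ B)ᵀ = Aᵀ ⊗ Bᵀ`. Hence `A† ⊗ B†` satisfies the equations for `A ⊗ B` and must be its
pseudo-inverse.
-/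

open Matrix Kronecker

def IsMoorePenrose {m n : Type*} [Fintype m] [Fintype n]
    (A : Matrix m n ℝ) (B : Matrix n m ℝ) : Prop :=
  A * B * A = A ∧ B * A * B = B ∧ (A * B)ᵀ = A * B ∧ (B * A)ᵀ = B * A

namespace IsMoorePenrose

variable {m n p q : Type*} [Fintype m] [Fintype n] [Fintype p] [Fintype q]

theorem unique {M : Matrix m n ℝ} {X Y : Matrix n m ℝ}
    (hX : IsMoorePenrose M X) (hY : IsMoorePenrose M Y) : X = Y := by
  obtain ⟨hX₁, hX₂, hX₃, hX₄⟩ := hX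
  obtain ⟨hY₁, hY₂, hY₃, hY₄⟩ := hY
  have hX_eq : X = X * M * Y :=
    calc X = X * M * X := hX₂.symm
      _ = X * (M * X)ᵀ := by rw [hX₃, Matrix.mul_assoc]
      _ = X * (M * Y * M * X)ᵀ := by rw [hY₁]
      _ = X * (M * X)ᵀ * (M * Y)ᵀ := by
        rw [Matrix.mul_assoc (M * Y) M X, transpose_mul, Matrix.mul_assoc]
      _ = X * (M * X) * (M * Y) := by rw [hX₃, hY₃]
      _ = X * M * Y := by rw [← Matrix.mul_assoc, ← Matrix.mul_assoc, hX₂]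
  have hY_eq : Y = X * M * Y :=
    calc Y = Y * M * Y := hY₂.symm
      _ = (Y * M)ᵀ * Y := by rw [hY₄]
      _ = (Y * M * (X * M))ᵀ * Y := by
        rw [Matrix.mul_assoc Y M (X * M), ← Matrix.mul_assoc M X M, hX₁]
      _ = (X * M)ᵀ * (Y * M)ᵀ * Y := by rw [transpose_mul]
      _ = X * M * (Y * M) * Y := by rw [hX₄, hY₄]
      _ = X * M * Y := by rw [Matrix.mul_assoc (X * M) (Y * M) Y, hY₂]
  rw [hX_eq, ← hY_eq]

theorem kronecker {A : Matrix m n ℝ} {B : Matrix p q ℝ} {A' : Matrix n m ℝ}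
    {B' : Matrix q p ℝ} (hA : IsMoorePenrose A A') (hB : IsMoorePenrose B B') :
    IsMoorePenrose (A ⊗ₖ B) (A' ⊗ₖ B') := by
  obtain ⟨hA₁, hA₂, hA₃, hA₄⟩ := hA
  obtain ⟨hB₁, hB₂, hB₃, hB₄⟩ := hB
  refine ⟨?_, ?_, ?_, ?_⟩
  · rw [← mul_kronecker_mul, ← mul_kronecker_mul, hA₁, hB₁]
  · rw [← mul_kronecker_mul, ← mul_kronecker_mul, hA₂, hB₂]
  · rw [← mul_kronecker_mul, ← kroneckerMap_transpose, hA₃, hB₃]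
  · rw [← mul_kronecker_mul, ← kroneckerMap_transpose, hA₄, hB₄]

end IsMoorePenrose

/-- The Moore–Penrose pseudo-inverse of a Kronecker product is the Kronecker
product of the pseudo-inverses: `(A ⊗ B)† = A† ⊗ B†`. -/
theorem pinv_kronecker {m n p q : Type*} [Fintype m] [Fintype n] [Fintype p] [Fintype q]
    (A : Matrix m n ℝ) (B : Matrix p q ℝ)
    (A' : Matrix n m ℝ) (B' : Matrix q p ℝ) (C : Matrix (n × q) (m × p) ℝ)
    (hA : IsMoorePenrose A A') (hB : IsMoorePenrose B B')
    (hC : IsMoorePenrose (A ⊗ₖ B) C) :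
    C = A' ⊗ₖ B' :=
  hC.unique (hA.kronecker hB)
end

section
/- Let C, D ∈ ℝ^{n×n} be symmetric positive semidefinite and suppose Γ = C + D. Then for any ψ ∈ R(D), one has ψᵀ Γ† ψ ≤ ψᵀ D† ψ. (In particular, adding a PSD matrix inside the pseudo-inverse can only decrease the quadratic form on the range of D.) -/
open Matrix

/-!
For `ψ = A x` in the range of a positive semidefinite `A` with pseudo-inverse `A†`, the concave
function `y ↦ 2 yᵀψ - yᵀAy` is bounded by `ψᵀA†ψ = xᵀAx`, since the gap is `(x - y)ᵀA(x - y) ≥ 0`;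
for symmetric `A` the bound is attained at `y = A†ψ`. Evaluating at `y = Γ†ψ`, where `Γ = C + D`,
gives `ψᵀΓ†ψ = 2 yᵀψ - yᵀΓy ≤ 2 yᵀψ - yᵀDy ≤ ψᵀD†ψ`.
-/

theorem Matrix.IsSymm.mulVec_dotProduct {n : Type*} [Fintype n] {A : Matrix n n ℝ}
    (hA : A.IsSymm) (u v : n → ℝ) : A *ᵥ u ⬝ᵥ v = u ⬝ᵥ (A *ᵥ v) := by
  rw [dotProduct_comm, ← dotProduct_transpose_mulVec, hA.eq]

namespace IsMoorePenrose

section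

variable {m n : Type*} [Fintype m] [Fintype n] {A : Matrix m n ℝ} {B B' : Matrix n m ℝ}

theorem transpose (h : IsMoorePenrose A B) : IsMoorePenrose Aᵀ Bᵀ := by
  obtain ⟨h₁, h₂, h₃, h₄⟩ := h
  refine ⟨?_, ?_, ?_, ?_⟩
  · rw [← transpose_mul, ← transpose_mul, ← Matrix.mul_assoc, h₁]
  · rw [← transpose_mul, ← transpose_mul, ← Matrix.mul_assoc, h₂]
  · rw [← transpose_mul, h₄, h₄]
  · rw [← transpose_mul, h₃, h₃]

theorem mul_right_eq (h : IsMoorePenrose A B) (h' : IsMoorePenrose A B') : A * B = A * B' :=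
  calc A * B = (A * B' * (A * B))ᵀ := by rw [← Matrix.mul_assoc, h'.1, h.2.2.1]
    _ = A * B * (A * B') := by rw [transpose_mul, h.2.2.1, h'.2.2.1]
    _ = A * B' := by rw [← Matrix.mul_assoc, h.1]

theorem mul_left_eq (h : IsMoorePenrose A B) (h' : IsMoorePenrose A B') : B * A = B' * A := by
  simpa using congrArg Matrix.transpose (h.transpose.mul_right_eq h'.transpose)

theorem unique_s7 (h : IsMoorePenrose A B) (h' : IsMoorePenrose A B') : B = B' :=
  calc B = B' * A * B := by rw [← h.mul_left_eq h', h.2.1]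
    _ = B' := by rw [Matrix.mul_assoc, h.mul_right_eq h', ← Matrix.mul_assoc, h'.2.1]

end

variable {n : Type*} [Fintype n] {A B : Matrix n n ℝ}

theorem isSymm (hA : A.IsSymm) (h : IsMoorePenrose A B) : B.IsSymm := by
  have hT := h.transpose
  rw [hA.eq] at hT
  exact hT.unique_s7 h

theorem two_dotProduct_sub_le (hA : A.PosSemidef) (h : IsMoorePenrose A B) {ψ : n → ℝ}
    (hψ : ψ ∈ LinearMap.range A.mulVecLin) (y : n → ℝ) :
    2 * (y ⬝ᵥ ψ) - y ⬝ᵥ (A *ᵥ y) ≤ ψ ⬝ᵥ (B *ᵥ ψ) := by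
  obtain ⟨x, rfl⟩ := hψ
  have hAs : A.IsSymm := isHermitian_iff_isSymm.mp hA.isHermitian
  have hψ : A *ᵥ x ⬝ᵥ (B *ᵥ (A *ᵥ x)) = x ⬝ᵥ (A *ᵥ x) := by
    rw [hAs.mulVec_dotProduct, mulVec_mulVec, mulVec_mulVec, h.1]
  have hxy : x ⬝ᵥ (A *ᵥ y) = y ⬝ᵥ (A *ᵥ x) := by
    rw [dotProduct_comm, hAs.mulVec_dotProduct]
  have hgap : 0 ≤ (x - y) ⬝ᵥ (A *ᵥ (x - y)) := by
    simpa using hA.dotProduct_mulVec_nonneg (x - y)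
  simp only [mulVecLin_apply, mulVec_sub, dotProduct_sub, sub_dotProduct] at hgap ⊢
  rw [hψ]
  rw [hxy] at hgap
  linarith

theorem two_dotProduct_sub_eq (hA : A.IsSymm) (h : IsMoorePenrose A B) (ψ : n → ℝ) :
    2 * (B *ᵥ ψ ⬝ᵥ ψ) - B *ᵥ ψ ⬝ᵥ (A *ᵥ (B *ᵥ ψ)) = ψ ⬝ᵥ (B *ᵥ ψ) := by
  have hB := h.isSymm hA
  rw [hB.mulVec_dotProduct, hB.mulVec_dotProduct, mulVec_mulVec, mulVec_mulVec, h.2.1]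
  ring

end IsMoorePenrose

/-- For symmetric PSD `C, D` and `ψ ∈ R(D)`, `ψᵀ(C+D)†ψ ≤ ψᵀD†ψ`. -/
theorem quad_form_pinv_add_le {n : ℕ}
    (C D G Dp : Matrix (Fin n) (Fin n) ℝ) (ψ : Fin n → ℝ)
    (hC : C.PosSemidef) (hD : D.PosSemidef)
    (hG : IsMoorePenrose (C + D) G) (hDp : IsMoorePenrose D Dp)
    (hψ : ψ ∈ LinearMap.range D.mulVecLin) :
    ψ ⬝ᵥ (G *ᵥ ψ) ≤ ψ ⬝ᵥ (Dp *ᵥ ψ) := by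
  have hΓ : (C + D).IsSymm := isHermitian_iff_isSymm.mp (hC.add hD).isHermitian
  set y := G *ᵥ ψ
  have hCy : 0 ≤ y ⬝ᵥ (C *ᵥ y) := by simpa using hC.dotProduct_mulVec_nonneg y
  calc ψ ⬝ᵥ (G *ᵥ ψ) = 2 * (y ⬝ᵥ ψ) - y ⬝ᵥ ((C + D) *ᵥ y) :=
        (hG.two_dotProduct_sub_eq hΓ ψ).symm
    _ ≤ 2 * (y ⬝ᵥ ψ) - y ⬝ᵥ (D *ᵥ y) := by rw [add_mulVec, dotProduct_add]; linarith
    _ ≤ ψ ⬝ᵥ (Dp *ᵥ ψ) := hDp.two_dotProduct_sub_le hD hψ y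
end

section
/- Let C ∈ ℝ^{n×n} be symmetric positive semidefinite, D ∈ ℝ^{n×n} symmetric positive definite, and ψ ∈ ℝ^n with ψᵀD⁻¹ψ ≠ 0. Then the ratio ψᵀ(C + L·D)⁻¹ψ / (ψᵀ(L·D)⁻¹ψ) tends to 1 as L → ∞. -/
/-!
Since `C + L • D = L • (L⁻¹ • C + D)`, the factor `L⁻¹` cancels from the ratio, which becomes
`ψᵀ(L⁻¹ • C + D)⁻¹ψ / ψᵀD⁻¹ψ`; this tends to `1` because matrix inversion is continuous at the
invertible matrix `D`.
-/

open Matrix Filter Topology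

namespace Matrix

variable {ι K : Type*} [Fintype ι] [DecidableEq ι] [Field K]

theorem inv_smul_of_ne_zero (A : Matrix ι ι K) {c : K} (hc : c ≠ 0) :
    (c • A)⁻¹ = c⁻¹ • A⁻¹ := by
  by_cases hA : IsUnit A.det
  · exact inv_smul' A (Units.mk0 c hc) hA
  · have hcA : ¬IsUnit (c • A).det := by
      rwa [det_smul, IsUnit.mul_iff, not_and_or, or_iff_right (by simpa using hc.isUnit.pow _)]
    rw [nonsing_inv_apply_not_isUnit _ hA, nonsing_inv_apply_not_isUnit _ hcA, smul_zero]

theorem inv_add_smul_eq (C D : Matrix ι ι K) {c : K} (hc : c ≠ 0) :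
    (C + c • D)⁻¹ = c⁻¹ • (c⁻¹ • C + D)⁻¹ := by
  rw [← inv_smul_of_ne_zero _ hc, smul_add, smul_smul, mul_inv_cancel₀ hc, one_smul]

theorem tendsto_inv_smul_add [TopologicalSpace K] [IsTopologicalRing K]
    [ContinuousInv₀ K] (C : Matrix ι ι K) {D : Matrix ι ι K} (hD : IsUnit D.det) :
    Tendsto (fun t : K => (t • C + D)⁻¹) (𝓝 0) (𝓝 D⁻¹) := by
  have hinv : ContinuousAt Inv.inv D :=
    continuousAt_matrix_inv D <| by
      simpa only [Ring.inverse_eq_inv'] using continuousAt_inv₀ hD.ne_zero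
  have hlin : Tendsto (fun t : K => t • C + D) (𝓝 0) (𝓝 D) := by
    simpa using ((tendsto_id (x := 𝓝 (0 : K))).smul_const C).add_const D
  exact hinv.tendsto.comp hlin

end Matrix

theorem ratio_tendsto_one_general {n : ℕ}
    (C D : Matrix (Fin n) (Fin n) ℝ) (ψ : Fin n → ℝ)
    (hD : D.PosDef)
    (hψ : ψ ⬝ᵥ (D⁻¹ *ᵥ ψ) ≠ 0) :
    Tendsto
      (fun L : ℕ =>
        (ψ ⬝ᵥ ((C + (L : ℝ) • D)⁻¹ *ᵥ ψ)) / (ψ ⬝ᵥ (((L : ℝ) • D)⁻¹ *ᵥ ψ)))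
      atTop (nhds 1) := by
  set q : Matrix (Fin n) (Fin n) ℝ → ℝ := fun M => ψ ⬝ᵥ (M *ᵥ ψ)
  have hq : Continuous q :=
    continuous_const.dotProduct (continuous_id.matrix_mulVec continuous_const)
  have hlim : Tendsto (fun L : ℕ => q (((L : ℝ)⁻¹ • C + D)⁻¹) / q D⁻¹) atTop
      (𝓝 (q D⁻¹ / q D⁻¹)) :=
    ((hq.tendsto _).comp ((tendsto_inv_smul_add C hD.det_pos.ne'.isUnit).comp
      tendsto_inv_atTop_nhds_zero_nat)).div_const _
  rw [div_self hψ] at hlim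
  refine hlim.congr' ?_
  filter_upwards [eventually_ne_atTop 0] with L hL
  have hL' : (L : ℝ) ≠ 0 := Nat.cast_ne_zero.mpr hL
  simp only [q, inv_add_smul_eq C D hL', inv_smul_of_ne_zero D hL', smul_mulVec,
    dotProduct_smul, smul_eq_mul, mul_div_mul_left _ _ (inv_ne_zero hL')]

/-- For `C` symmetric PSD, `D` symmetric positive definite, and `ψ` with
`ψᵀD⁻¹ψ ≠ 0`, the ratio `ψᵀ(C + L·D)⁻¹ψ / ψᵀ(L·D)⁻¹ψ` tends to `1` as `L → ∞`. -/
theorem ratio_tendsto_one {n : ℕ}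
    (C D : Matrix (Fin n) (Fin n) ℝ) (ψ : Fin n → ℝ)
    (hC : C.PosSemidef) (hD : D.PosDef)
    (hψ : ψ ⬝ᵥ (D⁻¹ *ᵥ ψ) ≠ 0) :
    Tendsto
      (fun L : ℕ =>
        (ψ ⬝ᵥ ((C + (L : ℝ) • D)⁻¹ *ᵥ ψ)) / (ψ ⬝ᵥ (((L : ℝ) • D)⁻¹ *ᵥ ψ)))
      atTop (nhds 1) :=
  ratio_tendsto_one_general C D ψ hD hψ
end

section
/- Let B ∈ ℝ^{(M−1)×(M−1)} be symmetric positive definite, ρ, σ > 0, and set Γ = (1/ρ²) vec(I) vec(I)ᵀ + I_{M−1} ⊗ B ∈ ℝ^{(M−1)²×(M−1)²} (with B positive definite so Γ is invertible). Then vec(I)ᵀ Γ⁻¹ vec(I) = (1/ρ² + 1/Tr(B⁻¹))⁻¹. -/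
/-!
`Γ` is the rank-one update `I ⊗ B + c • w wᵀ` of `I ⊗ B`, with `c = 1/ρ²` and `w = vec I`, so the
Sherman–Morrison formula gives `wᵀ Γ⁻¹ w = t / (1 + c t)` where `t = wᵀ (I ⊗ B)⁻¹ w`. Since
`(I ⊗ B)⁻¹ = I ⊗ B⁻¹` maps `vec I` to `vec B⁻¹`, `t = Tr(B⁻¹)`, which is positive for `B ≻ 0`, and
`t / (1 + c t) = (c + 1/t)⁻¹`.
-/

open Matrix Kronecker

/-- Column-stacking vectorization of a matrix: `vec A (j, i) = A i j`. -/
def vec {n m : Type*} (A : Matrix n m ℝ) : m × n → ℝ := fun p => A p.2 p.1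

namespace Matrix

variable {ι K : Type*} [Fintype ι] [DecidableEq ι] [Field K]

theorem inv_add_vecMulVec {A : Matrix ι ι K} (hA : IsUnit A.det) (u v : ι → K)
    (h : 1 + v ⬝ᵥ A⁻¹ *ᵥ u ≠ 0) :
    (A + vecMulVec u v)⁻¹ = A⁻¹ - (1 + v ⬝ᵥ A⁻¹ *ᵥ u)⁻¹ • vecMulVec (A⁻¹ *ᵥ u) (v ᵥ* A⁻¹) := by
  refine inv_eq_right_inv ?_
  have hX (X : Matrix ι ι K) :
      (1 + v ⬝ᵥ A⁻¹ *ᵥ u)⁻¹ • X + ((1 + v ⬝ᵥ A⁻¹ *ᵥ u)⁻¹ * (v ⬝ᵥ A⁻¹ *ᵥ u)) • X = X := by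
    rw [← add_smul, ← mul_one_add, inv_mul_cancel₀ h, one_smul]
  rw [Matrix.mul_sub, Matrix.add_mul, Matrix.add_mul, mul_nonsing_inv _ hA, Matrix.mul_smul,
    Matrix.mul_smul, mul_vecMulVec, mulVec_mulVec, mul_nonsing_inv _ hA, one_mulVec,
    vecMulVec_mul, vecMulVec_mul_vecMulVec, vecMulVec_smul, smul_smul, hX, add_sub_cancel_right]

theorem dotProduct_inv_add_smul_vecMulVec_mulVec {A : Matrix ι ι K} (hA : IsUnit A.det)
    (c : K) (u v : ι → K) (h : 1 + c * (v ⬝ᵥ A⁻¹ *ᵥ u) ≠ 0) :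
    v ⬝ᵥ (A + c • vecMulVec u v)⁻¹ *ᵥ u = (v ⬝ᵥ A⁻¹ *ᵥ u) / (1 + c * (v ⬝ᵥ A⁻¹ *ᵥ u)) := by
  have hs : v ⬝ᵥ A⁻¹ *ᵥ (c • u) = c * (v ⬝ᵥ A⁻¹ *ᵥ u) := by
    rw [mulVec_smul, dotProduct_smul, smul_eq_mul]
  rw [← smul_vecMulVec, inv_add_vecMulVec hA _ _ (hs ▸ h), hs, sub_mulVec, smul_mulVec,
    vecMulVec_mulVec, ← dotProduct_mulVec, dotProduct_sub, dotProduct_smul, dotProduct_smul,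
    op_smul_eq_smul, hs, smul_eq_mul, smul_eq_mul]
  generalize v ⬝ᵥ A⁻¹ *ᵥ u = s at h ⊢
  rw [eq_div_iff h]
  linear_combination (-(s * (c * s))) * inv_mul_cancel₀ h

theorem vec_one_dotProduct_one_kronecker_mulVec_vec_one {n R : Type*} [Fintype n]
    [DecidableEq n] [CommSemiring R] (B : Matrix n n R) :
    Matrix.vec 1 ⬝ᵥ ((1 : Matrix n n R) ⊗ₖ B) *ᵥ Matrix.vec 1 = B.trace := by
  rw [← vec_mul_eq_mulVec, Matrix.mul_one, vec_dotProduct_vec, transpose_one, Matrix.one_mul]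

end Matrix

theorem vec_eq_matrix_vec {n m : Type*} (A : Matrix n m ℝ) : _root_.vec A = Matrix.vec A := rfl

theorem lu_ccrb_closed_form_general {r : ℕ} (hr : 0 < r)
    (B : Matrix (Fin r) (Fin r) ℝ) (ρ : ℝ)
    (hB : B.PosDef) :
    letI w : Fin r × Fin r → ℝ := _root_.vec (1 : Matrix (Fin r) (Fin r) ℝ)
    letI Γ : Matrix (Fin r × Fin r) (Fin r × Fin r) ℝ :=
      (ρ ^ 2)⁻¹ • vecMulVec w w + (1 : Matrix (Fin r) (Fin r) ℝ) ⊗ₖ B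
    w ⬝ᵥ (Γ⁻¹ *ᵥ w) = ((ρ ^ 2)⁻¹ + (B⁻¹.trace)⁻¹)⁻¹ := by
  have : Nonempty (Fin r) := ⟨⟨0, hr⟩⟩
  have htrace : 0 < B⁻¹.trace := hB.inv.trace_pos
  have hdet : IsUnit ((1 : Matrix (Fin r) (Fin r) ℝ) ⊗ₖ B).det := by
    rw [det_kronecker, det_one, one_pow, one_mul]
    exact (isUnit_iff_ne_zero.mpr hB.det_pos.ne').pow _
  have hquad : Matrix.vec 1 ⬝ᵥ ((1 : Matrix (Fin r) (Fin r) ℝ) ⊗ₖ B)⁻¹ *ᵥ Matrix.vec 1 =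
      B⁻¹.trace := by
    rw [inv_kronecker, inv_one, vec_one_dotProduct_one_kronecker_mulVec_vec_one]
  simp only [vec_eq_matrix_vec]
  rw [add_comm, dotProduct_inv_add_smul_vecMulVec_mulVec hdet _ _ _ (by rw [hquad]; positivity),
    hquad]
  field_simp
  ring

/-- For `B` symmetric positive definite and
`Γ = (1/ρ²) vec(I) vec(I)ᵀ + I ⊗ B`, one has
`vec(I)ᵀ Γ⁻¹ vec(I) = (1/ρ² + 1/Tr(B⁻¹))⁻¹`. -/
theorem lu_ccrb_closed_form {r : ℕ} (hr : 0 < r)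
    (B : Matrix (Fin r) (Fin r) ℝ) (ρ σ : ℝ)
    (hB : B.PosDef) (hρ : 0 < ρ) (hσ : 0 < σ) :
    letI w : Fin r × Fin r → ℝ := _root_.vec (1 : Matrix (Fin r) (Fin r) ℝ)
    letI Γ : Matrix (Fin r × Fin r) (Fin r × Fin r) ℝ :=
      (ρ ^ 2)⁻¹ • vecMulVec w w + (1 : Matrix (Fin r) (Fin r) ℝ) ⊗ₖ B
    w ⬝ᵥ (Γ⁻¹ *ᵥ w) = ((ρ ^ 2)⁻¹ + (B⁻¹.trace)⁻¹)⁻¹ :=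
  lu_ccrb_closed_form_general hr B ρ hB
end
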